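/- The series ∑_{k=0}^∞ (-1/4)^k · (1)_k/((3/2)_k) · (4/(1+k)⁴ − 5·H_k^{(2)}/(1+k)²) equals 4·ζ(5), where H_k^{(2)} = ∑_{j=1}^k 1/j² is the k-th second-order harmonic number. -/

import Mathlib

open scoped BigOperators

noncomputable def poch (x : ℝ) (k : ℕ) : ℝ := (ascPochhammer ℝ k).eval x

noncomputable def H (n : ℕ) : ℝ := ∑ j ∈ Finset.range n, (1 : ℝ) / ((j : ℝ) + 1)

noncomputable def H2 (n : ℕ) : ℝ := ∑ j ∈ Finset.range n, (1 : ℝ) / ((j : ℝ) + 1) ^ 2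

noncomputable def zeta (s : ℕ) : ℝ := ∑' n : ℕ, (1 : ℝ) / ((n : ℝ) + 1) ^ s



lemma poch_one (k : ℕ) : poch 1 k = (k.factorial : ℝ) := by
  simpa [poch] using ascPochhammer_eval_one ℝ k

lemma poch_32 (k : ℕ) : poch (3/2) k = ((2*k+1).factorial : ℝ) / (4^k * k.factorial) := by
  induction k with
  | zero => simp [poch]
  | succ n ih =>
    have h : poch (3/2) (n+1) = poch (3/2) n * (3/2 + n) := by
      simp [poch, ascPochhammer_succ_right, Polynomial.eval_mul]
    have e1 : ((2*(n+1)+1).factorial : ℝ) = (2*n+3) * (2*n+2) * ((2*n+1).factorial) := by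
      have : 2*(n+1)+1 = (2*n+2) + 1 := by ring
      rw [this, Nat.factorial_succ, show (2*n+2) = (2*n+1)+1 from by ring,
        Nat.factorial_succ (2*n+1)]
      push_cast; ring
    have e2 : ((n+1).factorial : ℝ) = (n+1) * n.factorial := by
      rw [Nat.factorial_succ]; push_cast; ring
    rw [h, ih, e1, e2]
    have hf : (n.factorial : ℝ) ≠ 0 := by exact_mod_cast n.factorial_ne_zero
    field_simp
    ring

lemma H2_nonneg (k : ℕ) : 0 ≤ H2 k := by
  apply Finset.sum_nonneg; intro i _; positivity

lemma H2_le_two (k : ℕ) : H2 k ≤ 2 := by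
  have h : ∀ n : ℕ, H2 (n+1) ≤ 2 - 1/((n:ℝ)+1) := by
    intro n
    induction n with
    | zero => simp [H2]; norm_num
    | succ m ih =>
      rw [H2, Finset.sum_range_succ, ← H2]
      have hm : (0:ℝ) < (m:ℝ)+1 := by positivity
      have h1 : (1:ℝ)/(((m:ℕ):ℝ)+1+1)^2 ≤ 1/((m:ℝ)+1) - 1/((m:ℝ)+1+1) := by
        rw [div_sub_div _ _ (by positivity) (by positivity)]
        rw [div_le_div_iff₀ (by positivity) (by positivity)]
        nlinarith
      push_cast at h1 ⊢
      linarith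
  cases k with
  | zero => simp [H2]
  | succ n =>
    have := h n
    have : (0:ℝ) < 1/((n:ℝ)+1) := by positivity
    linarith [h n]

lemma fact_mul_fact_le (a b : ℕ) : (a.factorial * b.factorial : ℝ) ≤ ((a+b).factorial : ℝ) := by
  have := Nat.factorial_mul_factorial_dvd_factorial_add a b
  exact_mod_cast Nat.cast_le.mpr (Nat.le_of_dvd (Nat.factorial_pos _) this)


lemma summable_inv_sq : Summable (fun k : ℕ => 1/((k:ℝ)+1)^2) := by
  have h : Summable (fun n : ℕ => 1/((n:ℝ))^2) := Real.summable_one_div_nat_pow.2 (by norm_num)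
  have := (summable_nat_add_iff 1).2 h
  simpa using this

lemma summable_inv_cube : Summable (fun k : ℕ => 1/((k:ℝ)+1)^3) := by
  have h : Summable (fun n : ℕ => 1/((n:ℝ))^3) := Real.summable_one_div_nat_pow.2 (by norm_num)
  have := (summable_nat_add_iff 1).2 h
  simpa using this

lemma fact_tendsto_zero (b : ℕ) (hb : 1 ≤ b) :
    Filter.Tendsto (fun J : ℕ => (J.factorial : ℝ)/(b * (b+J).factorial)) Filter.atTop (nhds 0) := by
  apply squeeze_zero (fun J => by positivity) (g := fun J : ℕ => 1/((J:ℝ)+1))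
  · intro J
    have h1 : ((1+J).factorial : ℝ) ≤ ((b+J).factorial : ℝ) := by
      exact_mod_cast Nat.cast_le.mpr (Nat.factorial_le (by omega))
    have h2 : ((1+J).factorial : ℝ) = (J+1) * J.factorial := by
      rw [show 1+J = J+1 from by omega, Nat.factorial_succ]; push_cast; ring
    have hb' : (1:ℝ) ≤ (b:ℝ) := by exact_mod_cast hb
    have hfp : (0:ℝ) < ((b+J).factorial : ℝ) := by exact_mod_cast (b+J).factorial_pos
    rw [div_le_div_iff₀ (by positivity) (by positivity)]
    nlinarith [h1, h2, hfp]
  · exact tendsto_one_div_add_atTop_nhds_zero_nat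

lemma hsum_fact (b : ℕ) (hb : 1 ≤ b) :
    HasSum (fun j : ℕ => (j.factorial : ℝ)/((b+1+j).factorial)) (1/(b * b.factorial)) := by
  set f : ℕ → ℝ := fun j => (j.factorial : ℝ)/((b+1+j).factorial) with hf
  set T : ℕ → ℝ := fun j => (j.factorial : ℝ)/(b * (b+j).factorial) with hT
  have key : ∀ j, f j = T j - T (j+1) := by
    intro j
    have e1 : ((b+(j+1)).factorial : ℝ) = ((b:ℝ)+j+1) * (b+j).factorial := by
      rw [show b+(j+1) = (b+j)+1 from by ring, Nat.factorial_succ]; push_cast; ring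
    have e2 : ((j+1).factorial : ℝ) = ((j:ℝ)+1) * j.factorial := by
      rw [Nat.factorial_succ]; push_cast; ring
    have e3 : ((b+1+j).factorial : ℝ) = ((b:ℝ)+j+1) * (b+j).factorial := by
      rw [show b+1+j = (b+j)+1 from by ring, Nat.factorial_succ]; push_cast; ring
    have h1 : ((b+j).factorial : ℝ) ≠ 0 := by exact_mod_cast (b+j).factorial_ne_zero
    have h2 : (b:ℝ) ≠ 0 := by positivity
    have h3 : ((b:ℝ)+j+1) ≠ 0 := by positivity
    simp only [hf, hT, e1, e2, e3]
    field_simp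
    ring
  have hpart : ∀ J : ℕ, ∑ j ∈ Finset.range J, f j = T 0 - T J := by
    intro J
    simp only [key]
    exact Finset.sum_range_sub' T J
  have hsummable : Summable f := by
    refine Summable.of_nonneg_of_le (fun j => by positivity) ?_ summable_inv_sq
    intro j
    have h1 : ((2+j).factorial : ℝ) ≤ ((b+1+j).factorial : ℝ) := by
      exact_mod_cast Nat.cast_le.mpr (Nat.factorial_le (by omega))
    have h2 : ((2+j).factorial : ℝ) = ((j:ℝ)+2)*((j:ℝ)+1) * j.factorial := by
      rw [show 2+j = (j+1)+1 from by ring, Nat.factorial_succ, Nat.factorial_succ]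
      push_cast; ring
    have hf0 : (0:ℝ) < (j.factorial : ℝ) := by exact_mod_cast j.factorial_pos
    rw [div_le_div_iff₀ (by positivity) (by positivity)]
    have : (j.factorial:ℝ) * ((j:ℝ)+1)^2 ≤ (2+j).factorial := by rw [h2]; nlinarith
    nlinarith [h1]
  have hlim : Filter.Tendsto (fun J : ℕ => ∑ j ∈ Finset.range J, f j) Filter.atTop (nhds (1/(b * b.factorial))) := by
    simp only [hpart]
    have hT0 : T 0 = 1/(b * b.factorial) := by simp [hT]
    rw [← hT0]
    simpa using (tendsto_const_nhds (x := T 0)).sub (fact_tendsto_zero b hb)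
  have heq := tendsto_nhds_unique hsummable.hasSum.tendsto_sum_nat hlim
  exact heq ▸ hsummable.hasSum



noncomputable def P (m n : ℕ) : ℝ := ∏ i ∈ Finset.range n, ((m:ℝ)^2 - ((i:ℝ)+1)^2)

lemma P_succ (m n : ℕ) : P m (n+1) = P m n * ((m:ℝ)^2 - ((n:ℝ)+1)^2) := by
  simp [P, Finset.prod_range_succ]

lemma P_ne_zero (m n : ℕ) (h : n < m) : P m n ≠ 0 := by
  simp only [P]
  apply Finset.prod_ne_zero_iff.mpr
  intro i hi
  have hi' : i + 1 < m := by simp at hi; omega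
  have h1 : ((i:ℝ)+1) < (m:ℝ) := by exact_mod_cast hi'
  have h2 : (0:ℝ) ≤ (i:ℝ)+1 := by positivity
  nlinarith

lemma Pfact : ∀ n j : ℕ, P (n+1+j) n =
    ((n+j).factorial * (2*n+1+j).factorial : ℝ) / (j.factorial * (n+1+j).factorial) := by
  intro n
  induction n with
  | zero =>
    intro j
    have h1 : (j.factorial : ℝ) ≠ 0 := by exact_mod_cast j.factorial_ne_zero
    have h2 : ((1+j).factorial : ℝ) ≠ 0 := by exact_mod_cast (1+j).factorial_ne_zero
    simp [P]
    rw [div_self (by exact mul_ne_zero h1 h2)]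
  | succ n ih =>
    intro j
    have hm : n+1+1+j = n+1+(j+1) := by omega
    have h1 : P (n+1+(j+1)) (n+1) = P (n+1+(j+1)) n * (((n+1+(j+1):ℕ):ℝ)^2 - ((n:ℝ)+1)^2) := by
      rw [P_succ]
    rw [hm, h1, ih (j+1)]
    have e1 : ((n+1+(j+1)).factorial : ℝ) = ((n:ℝ)+j+2) * (n+1+j).factorial := by
      rw [show n+1+(j+1) = (n+1+j)+1 from by ring, Nat.factorial_succ]; push_cast; ring
    have e2 : ((n+(j+1)).factorial : ℝ) = ((n:ℝ)+j+1) * (n+j).factorial := by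
      rw [show n+(j+1) = (n+j)+1 from by ring, Nat.factorial_succ]; push_cast; ring
    have e3 : ((2*n+1+(j+1)).factorial : ℝ) = (2*(n:ℝ)+j+2) * (2*n+1+j).factorial := by
      rw [show 2*n+1+(j+1) = (2*n+1+j)+1 from by ring, Nat.factorial_succ]; push_cast; ring
    have e4 : ((2*(n+1)+1+j).factorial : ℝ) = (2*(n:ℝ)+3+j) * (2*(n:ℝ)+2+j) * (2*n+1+j).factorial := by
      rw [show 2*(n+1)+1+j = ((2*n+1+j)+1)+1 from by ring, Nat.factorial_succ, Nat.factorial_succ]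
      push_cast; ring
    have e5 : (((n+1)+j).factorial : ℝ) = ((n:ℝ)+j+1) * (n+j).factorial := by
      rw [show (n+1)+j = (n+j)+1 from by ring, Nat.factorial_succ]; push_cast; ring
    have e6 : (((j+1)).factorial : ℝ) = ((j:ℝ)+1) * j.factorial := by
      rw [Nat.factorial_succ]; push_cast; ring
    have e7 : (((n+1)+1+j).factorial : ℝ) = ((n:ℝ)+j+2) * (n+1+j).factorial := by
      rw [show (n+1)+1+j = (n+1+j)+1 from by ring, Nat.factorial_succ]; push_cast; ring
    rw [e2, e3, e6, e1, e4, e5]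
    have hfj : (j.factorial : ℝ) ≠ 0 := by exact_mod_cast j.factorial_ne_zero
    have hf1 : ((n+j).factorial : ℝ) ≠ 0 := by exact_mod_cast (n+j).factorial_ne_zero
    have hf2 : ((n+1+j).factorial : ℝ) ≠ 0 := by exact_mod_cast (n+1+j).factorial_ne_zero
    have hf3 : ((2*n+1+j).factorial : ℝ) ≠ 0 := by exact_mod_cast (2*n+1+j).factorial_ne_zero
    push_cast
    field_simp
    ring

lemma H2_succ (n : ℕ) : H2 (n+1) = H2 n + 1/((n:ℝ)+1)^2 := by
  simp [H2, Finset.sum_range_succ]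

lemma keyL (m : ℕ) : ∀ N, N < m →
    ∑ n ∈ Finset.range N, (-1:ℝ)^(n+1) * (n.factorial:ℝ)^2 * H2 n / P m (n+1)
    = (1 - (-1:ℝ)^N * (N.factorial:ℝ)^2 / P m N)/(m:ℝ)^4
      + (-1:ℝ)^N * (N.factorial:ℝ)^2 * H2 N / ((m:ℝ)^2 * P m N) := by
  intro N
  induction N with
  | zero => intro _; simp [P, H2]
  | succ N ih =>
    intro h
    have hN : N < m := by omega
    rw [Finset.sum_range_succ, ih hN]
    have hm0 : 0 < m := by omega
    have hmR : (0:ℝ) < (m:ℝ) := by exact_mod_cast hm0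
    have hmne : ((m:ℝ)) ≠ 0 := ne_of_gt hmR
    have hPne : P m N ≠ 0 := P_ne_zero m N hN
    have hNm : (N:ℝ)+1 < (m:ℝ) := by exact_mod_cast h
    have hqne : (m:ℝ)^2 - ((N:ℝ)+1)^2 ≠ 0 := by nlinarith
    rw [P_succ, H2_succ]
    have e1 : ((N+1).factorial : ℝ) = ((N:ℝ)+1) * N.factorial := by
      rw [Nat.factorial_succ]; push_cast; ring
    rw [e1]
    have hNe : ((N:ℝ)+1) ≠ 0 := by positivity
    have hfne : ((N.factorial:ℝ)) ≠ 0 := by exact_mod_cast N.factorial_ne_zero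
    push_cast
    field_simp
    ring

noncomputable def dd (k : ℕ) : ℝ :=
  (-1:ℝ)^k * ((k.factorial : ℝ) * ((k+1).factorial : ℝ))/((2*k+1).factorial : ℝ)
    * (1/((k:ℝ)+1)^5 - H2 k/((k:ℝ)+1)^3)

noncomputable def g (n j : ℕ) : ℝ :=
  (-1:ℝ)^(n+1) * (n.factorial:ℝ)^2 * H2 n * (j.factorial:ℝ)/((2*n+3+j).factorial : ℝ)

noncomputable def w (k : ℕ) : ℝ := ∑ n ∈ Finset.range k, g n (k-1-n)

lemma perm (k : ℕ) : 1/((k:ℝ)+1)^5 = dd k + w k := by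
  have hk := keyL (k+1) k (Nat.lt_succ_self k)
  have hPkk : P (k+1) k = ((k.factorial : ℝ) * ((2*k+1).factorial : ℝ))/(((k+1).factorial : ℝ)) := by
    have := Pfact k 0
    simpa using this
  have hw : w k = (∑ n ∈ Finset.range k,
      (-1:ℝ)^(n+1) * (n.factorial:ℝ)^2 * H2 n / P (k+1) (n+1)) / ((k:ℝ)+1) := by
    rw [Finset.sum_div]
    apply Finset.sum_congr rfl
    intro n hn
    have hn' : n < k := Finset.mem_range.mp hn
    set j := k - 1 - n with hj
    have hkj : k = n + 1 + j := by omega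
    have hP : P (k+1) (n+1) = (((n+1)+j).factorial : ℝ) * ((2*(n+1)+1+j).factorial : ℝ)
        / ((j.factorial : ℝ) * (((n+1)+1+j).factorial : ℝ)) := by
      rw [show k+1 = (n+1)+1+j from by omega]
      exact Pfact (n+1) j
    rw [hP]
    simp only [g]
    have e0 : 2*(n+1)+1+j = 2*n+3+j := by ring
    rw [e0]
    have e1 : (n+1)+1+j = (n+1+j)+1 := by ring
    rw [e1, Nat.factorial_succ]
    have hkR : ((k:ℝ)) = (n:ℝ)+1+(j:ℝ) := by exact_mod_cast congrArg (Nat.cast : ℕ → ℝ) hkj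
    have h1 : ((n+1+j).factorial : ℝ) ≠ 0 := by exact_mod_cast (n+1+j).factorial_ne_zero
    have h2 : ((2*n+3+j).factorial : ℝ) ≠ 0 := by exact_mod_cast (2*n+3+j).factorial_ne_zero
    have h3 : ((j.factorial : ℝ)) ≠ 0 := by exact_mod_cast j.factorial_ne_zero
    have h5 : ((n:ℝ)+1+(j:ℝ))+1 ≠ 0 := by positivity
    rw [show (n+1)+j = n+1+j from rfl, hkR]
    push_cast
    field_simp
  rw [hw, hk, hPkk, dd]
  have h1 : ((k.factorial : ℝ)) ≠ 0 := by exact_mod_cast k.factorial_ne_zero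
  have h2 : (((k+1).factorial : ℝ)) ≠ 0 := by exact_mod_cast (k+1).factorial_ne_zero
  have h3 : (((2*k+1).factorial : ℝ)) ≠ 0 := by exact_mod_cast (2*k+1).factorial_ne_zero
  have h4 : ((k:ℝ)+1) ≠ 0 := by positivity
  have h5 : (((k+1:ℕ)):ℝ) = (k:ℝ)+1 := by push_cast; ring
  rw [h5]
  field_simp
  ring

noncomputable def cc (n : ℕ) : ℝ :=
  (-1:ℝ)^(n+1) * (n.factorial:ℝ)^2 * H2 n / ((2*(n:ℝ)+2) * ((2*n+2).factorial : ℝ))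

lemma hasSum_g (n : ℕ) : HasSum (fun j => g n j) (cc n) := by
  have h := (hsum_fact (2*n+2) (by omega)).mul_left ((-1:ℝ)^(n+1) * (n.factorial:ℝ)^2 * H2 n)
  have e : ∀ j : ℕ, 2*n+2+1+j = 2*n+3+j := fun j => by omega
  simp only [e] at h
  convert h using 2 with j
  · rfl
  · simp only [g]; ring
  · simp only [cc]; push_cast; ring

lemma abs_g (n j : ℕ) :
    |g n j| = (n.factorial:ℝ)^2 * H2 n * (j.factorial:ℝ)/((2*n+3+j).factorial : ℝ) := by
  have hH := H2_nonneg n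
  have hA : (0:ℝ) ≤ (n.factorial:ℝ)^2 * H2 n * (j.factorial:ℝ)/((2*n+3+j).factorial : ℝ) := by
    positivity
  have hg : g n j = (-1:ℝ)^(n+1) *
      ((n.factorial:ℝ)^2 * H2 n * (j.factorial:ℝ)/((2*n+3+j).factorial : ℝ)) := by
    simp only [g]; ring
  rw [hg, abs_mul, abs_pow, abs_neg, abs_one, one_pow, one_mul, abs_of_nonneg hA]

lemma cc_bound (n : ℕ) : |cc n| ≤ 1/((n:ℝ)+1)^3 := by
  have hH2 := H2_nonneg n
  have hH2' := H2_le_two n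
  have hcc : cc n = (-1:ℝ)^(n+1) *
      ((n.factorial:ℝ)^2 * H2 n / ((2*(n:ℝ)+2) * ((2*n+2).factorial : ℝ))) := by
    simp only [cc]; ring
  have hA : (0:ℝ) ≤ (n.factorial:ℝ)^2 * H2 n / ((2*(n:ℝ)+2) * ((2*n+2).factorial : ℝ)) := by
    positivity
  rw [hcc, abs_mul, abs_pow, abs_neg, abs_one, one_pow, one_mul, abs_of_nonneg hA]
  -- (2n+2)! ≥ (n+1)!^2 ≥ (n!)^2 (n+1)^2
  have h1 : ((n+1).factorial : ℝ) * ((n+1).factorial : ℝ) ≤ ((2*n+2).factorial : ℝ) := by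
    have := fact_mul_fact_le (n+1) (n+1)
    have e : (n+1)+(n+1) = 2*n+2 := by ring
    rwa [e] at this
  have h2 : ((n+1).factorial : ℝ) = ((n:ℝ)+1) * (n.factorial:ℝ) := by
    rw [Nat.factorial_succ]; push_cast; ring
  have hfpos : (0:ℝ) < (n.factorial:ℝ) := by exact_mod_cast n.factorial_pos
  have hfpos2 : (0:ℝ) < ((2*n+2).factorial : ℝ) := by exact_mod_cast (2*n+2).factorial_pos
  rw [div_le_div_iff₀ (by positivity) (by positivity)]
  have key : (n.factorial:ℝ)^2 * ((n:ℝ)+1)^2 ≤ ((2*n+2).factorial : ℝ) := by nlinarith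
  have s1 := mul_le_mul_of_nonneg_left hH2'
    (show (0:ℝ) ≤ (n.factorial:ℝ)^2*((n:ℝ)+1)^3 by positivity)
  have s2 : (n.factorial:ℝ)^2 * 2 * ((n:ℝ)+1)^3 ≤ (2*(n:ℝ)+2) * ((2*n+2).factorial : ℝ) := by
    nlinarith [mul_le_mul_of_nonneg_left key (by positivity : (0:ℝ) ≤ 2*((n:ℝ)+1))]
  nlinarith [s1, s2]
section part5

lemma abs_cc (n : ℕ) :
    |cc n| = (n.factorial:ℝ)^2 * H2 n / ((2*(n:ℝ)+2) * ((2*n+2).factorial : ℝ)) := by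
  have hH := H2_nonneg n
  have hcc : cc n = (-1:ℝ)^(n+1) *
      ((n.factorial:ℝ)^2 * H2 n / ((2*(n:ℝ)+2) * ((2*n+2).factorial : ℝ))) := by
    simp only [cc]; ring
  have hA : (0:ℝ) ≤ (n.factorial:ℝ)^2 * H2 n / ((2*(n:ℝ)+2) * ((2*n+2).factorial : ℝ)) := by
    positivity
  rw [hcc, abs_mul, abs_pow, abs_neg, abs_one, one_pow, one_mul, abs_of_nonneg hA]

lemma hasSum_abs_g (n : ℕ) : HasSum (fun j => |g n j|) (|cc n|) := by
  have h := (hsum_fact (2*n+2) (by omega)).mul_left ((n.factorial:ℝ)^2 * H2 n)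
  have e : ∀ j : ℕ, 2*n+2+1+j = 2*n+3+j := fun j => by omega
  simp only [e] at h
  have hfun : (fun j => |g n j|) =
      (fun j => (n.factorial:ℝ)^2 * H2 n * ((j.factorial:ℝ)/((2*n+3+j).factorial : ℝ))) :=
    funext (fun j => by rw [abs_g]; ring)
  have hval : |cc n| = (n.factorial:ℝ)^2 * H2 n * (1/(((2*n+2 : ℕ):ℝ) * ((2*n+2).factorial : ℝ))) := by
    rw [abs_cc]; push_cast; ring
  rw [hfun, hval]
  exact h

noncomputable def G : ℕ × ℕ → ℝ := fun p => g p.1 p.2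

lemma summable_absG : Summable (fun p : ℕ×ℕ => |G p|) := by
  apply (summable_prod_of_nonneg (fun p => abs_nonneg _)).2
  constructor
  · intro n
    exact (hasSum_abs_g n).summable
  · refine Summable.of_nonneg_of_le (f := fun n : ℕ => 1/((n:ℝ)+1)^3)
      (fun n => tsum_nonneg (fun j => abs_nonneg _)) ?_ summable_inv_cube
    intro n
    show (∑' j, |g n j|) ≤ 1/((n:ℝ)+1)^3
    rw [(hasSum_abs_g n).tsum_eq]
    exact cc_bound n

lemma summable_G : Summable G := summable_abs_iff.1 summable_absG

lemma summable_cc : Summable cc := by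
  apply summable_abs_iff.1
  exact Summable.of_nonneg_of_le (fun n => abs_nonneg _) cc_bound summable_inv_cube

lemma tsumG_eq_cc : ∑' p : ℕ×ℕ, G p = ∑' n, cc n := by
  rw [Summable.tsum_prod' summable_G (fun n => (hasSum_g n).summable)]
  exact tsum_congr (fun n => (hasSum_g n).tsum_eq)

lemma tsumG_eq_w : ∑' p : ℕ×ℕ, G p = ∑' n, w (n+1) := by
  rw [← Finset.HasAntidiagonal.sigmaAntidiagonalEquivProd.tsum_eq G]
  have h2 : Summable (G ∘ ⇑(Finset.HasAntidiagonal.sigmaAntidiagonalEquivProd (A := ℕ))) :=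
    Finset.HasAntidiagonal.sigmaAntidiagonalEquivProd.summable_iff.2 summable_G
  rw [show (fun c : Σ n:ℕ, {x // x ∈ Finset.HasAntidiagonal.antidiagonal n} =>
      G (Finset.HasAntidiagonal.sigmaAntidiagonalEquivProd c)) = G ∘ ⇑Finset.HasAntidiagonal.sigmaAntidiagonalEquivProd from rfl]
  rw [Summable.tsum_sigma' (fun n => (hasSum_fintype _).summable) h2]
  apply tsum_congr
  intro n
  show (∑' (c : {x // x ∈ Finset.HasAntidiagonal.antidiagonal n}), G (c : ℕ × ℕ)) = w (n+1)
  rw [Finset.tsum_subtype (Finset.HasAntidiagonal.antidiagonal n) G]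
  rw [Finset.Nat.sum_antidiagonal_eq_sum_range_succ_mk]
  rw [w]
  apply Finset.sum_congr rfl
  intro i hi
  have : n + 1 - 1 - i = n - i := by omega
  rw [this]
  rfl

lemma dd_bound (k : ℕ) : |dd k| ≤ 3/((k:ℝ)+1)^3 := by
  have hB1 : (k.factorial:ℝ) * ((k+1).factorial:ℝ) ≤ ((2*k+1).factorial : ℝ) := by
    have := fact_mul_fact_le k (k+1)
    have e : k+(k+1) = 2*k+1 := by ring
    rwa [e] at this
  have hB0 : (0:ℝ) < (k.factorial:ℝ) * ((k+1).factorial:ℝ) := by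
    have h1 : (0:ℝ) < (k.factorial:ℝ) := by exact_mod_cast k.factorial_pos
    have h2 : (0:ℝ) < ((k+1).factorial:ℝ) := by exact_mod_cast (k+1).factorial_pos
    positivity
  have hBf : (0:ℝ) < ((2*k+1).factorial : ℝ) := by exact_mod_cast (2*k+1).factorial_pos
  have hdd : dd k = (-1:ℝ)^k * (((k.factorial:ℝ) * ((k+1).factorial:ℝ))/((2*k+1).factorial : ℝ)
      * (1/((k:ℝ)+1)^5 - H2 k/((k:ℝ)+1)^3)) := by
    simp only [dd]; ring
  rw [hdd, abs_mul, abs_pow, abs_neg, abs_one, one_pow, one_mul, abs_mul]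
  have hkp : (0:ℝ) < (k:ℝ)+1 := by positivity
  set y := 1/((k:ℝ)+1)^3 with hy
  have hyp : (0:ℝ) < y := by rw [hy]; positivity
  have hBfrac : (0:ℝ) ≤ ((k.factorial:ℝ) * ((k+1).factorial:ℝ))/((2*k+1).factorial : ℝ) := by
    positivity
  have hBle : ((k.factorial:ℝ) * ((k+1).factorial:ℝ))/((2*k+1).factorial : ℝ) ≤ 1 := by
    rw [div_le_one hBf]; exact hB1
  rw [abs_of_nonneg hBfrac]
  have hC : |1/((k:ℝ)+1)^5 - H2 k * y| ≤ 3*y := by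
    have hH := H2_nonneg k
    have hH' := H2_le_two k
    have hple : ((k:ℝ)+1)^3 ≤ ((k:ℝ)+1)^5 :=
      pow_le_pow_right₀ (by linarith) (by norm_num)
    have h5 : 1/((k:ℝ)+1)^5 ≤ y := by
      rw [hy]
      exact one_div_le_one_div_of_le (by positivity) hple
    have h5' : (0:ℝ) < 1/((k:ℝ)+1)^5 := by positivity
    have hm : H2 k * y ≤ 2*y := mul_le_mul_of_nonneg_right hH' hyp.le
    have hm0 : 0 ≤ H2 k * y := mul_nonneg hH hyp.le
    rw [abs_le]; constructor <;> nlinarith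
  have hdiv : H2 k / ((k:ℝ)+1)^3 = H2 k * y := by rw [hy]; ring
  rw [hdiv]
  calc ((k.factorial:ℝ) * ((k+1).factorial:ℝ))/((2*k+1).factorial : ℝ) * |1/((k:ℝ)+1)^5 - H2 k * y|
      ≤ 1 * (3*y) := by
        apply mul_le_mul hBle hC (abs_nonneg _) zero_le_one
  _ = 3/((k:ℝ)+1)^3 := by rw [hy]; ring

end part5



lemma summable_f5 : Summable (fun k : ℕ => 1/((k:ℝ)+1)^5) := by
  have h : Summable (fun n : ℕ => 1/((n:ℝ))^5) := Real.summable_one_div_nat_pow.2 (by norm_num)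
  have := (summable_nat_add_iff 1).2 h
  simpa using this

lemma summable_dd : Summable dd := by
  apply summable_abs_iff.1
  refine Summable.of_nonneg_of_le (f := fun k : ℕ => 3 * (1/((k:ℝ)+1)^3))
    (fun k => abs_nonneg _) ?_ (summable_inv_cube.mul_left 3)
  intro k
  simpa [mul_one_div, div_eq_mul_inv] using dd_bound k

lemma summable_w : Summable w := by
  have hfun : w = fun k : ℕ => 1/((k:ℝ)+1)^5 - dd k := by
    funext k
    have := perm k
    linarith
  rw [hfun]
  exact summable_f5.sub summable_dd

lemma tsum_w_eq : ∑' k, w k = ∑' n, cc n := by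
  rw [Summable.tsum_eq_zero_add summable_w]
  have hw0 : w 0 = 0 := by simp [w]
  rw [hw0, zero_add, ← tsumG_eq_w, tsumG_eq_cc]

lemma zeta5_eq : zeta 5 = ∑' k, dd k + ∑' n, cc n := by
  have h1 : zeta 5 = ∑' k : ℕ, (dd k + w k) := by
    rw [zeta]
    exact tsum_congr (fun k => perm k)
  rw [h1, Summable.tsum_add summable_dd summable_w, tsum_w_eq]

lemma pointwise (k : ℕ) :
    (-1/4 : ℝ) ^ k * poch 1 k / poch (3/2) k *
      (4 / (1 + (k : ℝ)) ^ 4 - 5 * H2 k / (1 + (k : ℝ)) ^ 2) = 4 * (dd k + cc k) := by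
  rw [poch_one, poch_32, dd, cc]
  have h1 : ((k.factorial:ℝ)) ≠ 0 := by exact_mod_cast k.factorial_ne_zero
  have h2 : (((2*k+1).factorial:ℝ)) ≠ 0 := by exact_mod_cast (2*k+1).factorial_ne_zero
  have h3 : ((4:ℝ))^k ≠ 0 := by positivity
  have h4 : ((k:ℝ)+1) ≠ 0 := by positivity
  have e1 : (((k+1).factorial:ℝ)) = ((k:ℝ)+1) * (k.factorial:ℝ) := by
    rw [Nat.factorial_succ]; push_cast; ring
  have e2 : (((2*k+2).factorial:ℝ)) = (2*(k:ℝ)+2) * ((2*k+1).factorial:ℝ) := by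
    rw [show 2*k+2 = (2*k+1)+1 from by ring, Nat.factorial_succ]; push_cast; ring
  have e3 : ((-1/4:ℝ))^k = (-1:ℝ)^k / 4^k := by
    rw [div_pow]
  rw [e1, e2, e3, pow_succ]
  field_simp
  ring

theorem stmt4 :
    ∑' k : ℕ, (-1/4 : ℝ) ^ k * poch 1 k / poch (3/2) k *
      (4 / (1 + (k : ℝ)) ^ 4 - 5 * H2 k / (1 + (k : ℝ)) ^ 2) = 4 * zeta 5 := by
  rw [tsum_congr pointwise, tsum_mul_left, Summable.tsum_add summable_dd summable_cc, zeta5_eq]
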